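/- Define φ₅(x) = 4i·x(x−1)(4x − 2 − 11i)⁴ / (8x − 4 + 3i)⁵ over ℂ. Then there exists a polynomial R(x) ∈ ℂ[x] of degree 3 and a nonzero constant c such that φ₅(x) − 1 = c·R(x)²/(8x − 4 + 3i)⁵ as rational functions. -/

import Mathlib

open Polynomial Complex

lemma gaussian_quintic_sub_eq_mul_sq {A : Type*} [CommRing A] {i : A} (hi : i ^ 2 = -1) (x : A) :
    4 * i * x * (x - 1) * (4 * x - (2 + 11 * i)) ^ 4 - (8 * x - (4 - 3 * i)) ^ 5 =
      i * (32 * x ^ 3 + (-48 + 336 * i) * x ^ 2 + (98 - 336 * i) * x + (-41 - 38 * i)) ^ 2 := by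
  have hi3 : i ^ 3 = -i := by rw [pow_succ, hi, neg_one_mul]
  have hi4 : i ^ 4 = 1 := by rw [pow_mul' i 2 2, hi, neg_one_sq]
  have hi5 : i ^ 5 = i := by rw [pow_succ, hi4, one_mul]
  ring_nf
  rw [hi, hi3, hi4, hi5]
  ring

lemma C_I_sq : (C I : ℂ[X]) ^ 2 = -1 := by
  rw [← C_pow, I_sq, map_neg, map_one]

/-- For the degree-6 covering φ₅ = 4i·x(x-1)(4x-2-11i)⁴/(8x-4+3i)⁵, the numerator
    of φ₅(x) - 1 is a nonzero constant times the square of a cubic polynomial. -/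
theorem stmt_12 (Num Den : Polynomial ℂ)
    (hNum : Num = C (4 * I) * X * (X - 1) * (C 4 * X - C (2 + 11 * I)) ^ 4)
    (hDen : Den = (C 8 * X - C (4 - 3 * I)) ^ 5) :
    ∃ (R : Polynomial ℂ) (c : ℂ) , c ≠ 0 ∧ R.natDegree = 3 ∧
      Num - Den = C c * R ^ 2 := by
  refine ⟨32 * X ^ 3 + (-48 + 336 * C I) * X ^ 2 + (98 - 336 * C I) * X + (-41 - 38 * C I),
    I, I_ne_zero, by compute_degree!, ?_⟩
  subst hNum hDen
  simp only [map_mul, map_add, map_sub, map_ofNat]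
  exact gaussian_quintic_sub_eq_mul_sq C_I_sq X
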